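/- arXiv:2603.22185 — 3 statements merged into one kernel-verified Lean document; each statement's English description precedes it below -/
import Mathlib

section
/- The second cohomology group H²(G, F^×) of G with coefficients in the multiplicative group F^×, regarded as a trivial G-module, is isomorphic as an abelian group to the quotient F^×/(F^×)^m of F^× by its subgroup of m-th powers. -/
section H2
variable (G : Type*) [Group G] (A : Type*) [CommGroup A]

/-- Normalized 2-cocycles of `G` with values in `A` (trivial action). -/
def IsTwoCocycle (c : G → G → A) : Prop :=
  (∀ x y z : G, c x y * c (x * y) z = c y z * c x (y * z)) ∧
    (∀ x : G, c x 1 = 1) ∧ (∀ x : G, c 1 x = 1)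

/-- The group of normalized 2-cocycles. -/
def twoCocycles : Subgroup (G → G → A) where
  carrier := {c | IsTwoCocycle G A c}
  one_mem' := ⟨fun _ _ _ => by simp, fun _ => rfl, fun _ => rfl⟩
  mul_mem' := by
    rintro c d ⟨hc, hc1, hc2⟩ ⟨hd, hd1, hd2⟩
    refine ⟨fun x y z => ?_, fun x => ?_, fun x => ?_⟩
    · simp only [Pi.mul_apply]
      rw [mul_mul_mul_comm, hc x y z, hd x y z, mul_mul_mul_comm]
    · simp [Pi.mul_apply, hc1 x, hd1 x]
    · simp [Pi.mul_apply, hc2 x, hd2 x]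
  inv_mem' := by
    rintro c ⟨hc, hc1, hc2⟩
    refine ⟨fun x y z => ?_, fun x => ?_, fun x => ?_⟩
    · simp only [Pi.inv_apply]
      rw [← mul_inv, hc x y z, mul_inv]
    · simp [Pi.inv_apply, hc1 x]
    · simp [Pi.inv_apply, hc2 x]

/-- The group of normalized 2-coboundaries. -/
def twoCoboundaries : Subgroup (G → G → A) where
  carrier := {c | ∃ t : G → A, t 1 = 1 ∧ ∀ x y : G, c x y = t x * t y * (t (x * y))⁻¹}
  one_mem' := ⟨fun _ => 1, rfl, fun x y => by simp⟩
  mul_mem' := by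
    rintro c d ⟨t, ht1, ht⟩ ⟨s, hs1, hs⟩
    refine ⟨t * s, by simp [ht1, hs1], fun x y => ?_⟩
    simp only [Pi.mul_apply, ht x y, hs x y, mul_inv]
    simp [mul_comm, mul_left_comm, mul_assoc]
  inv_mem' := by
    rintro c ⟨t, ht1, ht⟩
    refine ⟨t⁻¹, by simp [ht1], fun x y => ?_⟩
    simp only [Pi.inv_apply, ht x y, mul_inv, inv_inv]

/-- The second cohomology group of `G` with coefficients in the trivial module `A`. -/
abbrev H2Group := twoCocycles G A ⧸ (twoCoboundaries G A).subgroupOf (twoCocycles G A)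

end H2

section ExtAux

lemma carry_cocycle_aux (m u v w : ℕ) (hm : 0 < m) :
    (u + v) / m + ((u + v) % m + w) / m = (v + w) / m + (u + (v + w) % m) / m := by
  have h1 : ((u + v) % m + w + m * ((u + v) / m)) / m
      = ((u + v) % m + w) / m + (u + v) / m := Nat.add_mul_div_left _ _ hm
  have h2 : (u + (v + w) % m + m * ((v + w) / m)) / m
      = (u + (v + w) % m) / m + (v + w) / m := Nat.add_mul_div_left _ _ hm
  have d1 := Nat.div_add_mod (u + v) m
  have d2 := Nat.div_add_mod (v + w) m
  have e1 : (u + v) % m + w + m * ((u + v) / m) = u + v + w := by omega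
  have e2 : u + (v + w) % m + m * ((v + w) / m) = u + v + w := by omega
  rw [e1] at h1; rw [e2] at h2; omega

variable {G : Type*} [Group G] {A : Type*} [CommGroup A]

/-- The central extension of `G` by `A` associated to a 2-cocycle. -/
@[ext]
structure ExtG (c : twoCocycles G A) : Type _ where
  g : G
  u : A

namespace ExtG

variable {c : twoCocycles G A}

instance : Mul (ExtG c) := ⟨fun x y => ⟨x.g * y.g, x.u * y.u * (c : G → G → A) x.g y.g⟩⟩
instance : One (ExtG c) := ⟨⟨1, 1⟩⟩
instance : Inv (ExtG c) := ⟨fun x => ⟨x.g⁻¹, (x.u * (c : G → G → A) x.g x.g⁻¹)⁻¹⟩⟩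

lemma mul_g (x y : ExtG c) : (x * y).g = x.g * y.g := rfl
lemma mul_u (x y : ExtG c) : (x * y).u = x.u * y.u * (c : G → G → A) x.g y.g := rfl
lemma one_g : (1 : ExtG c).g = 1 := rfl
lemma one_u : (1 : ExtG c).u = 1 := rfl
lemma inv_g (x : ExtG c) : (x⁻¹).g = x.g⁻¹ := rfl

lemma hcoc : IsTwoCocycle G A (c : G → G → A) := c.2

instance : Group (ExtG c) where
  mul_assoc x y z := by
    obtain ⟨h1, h2, h3⟩ := hcoc (c := c)
    ext
    · exact mul_assoc _ _ _
    · show (x.u * y.u * (c : G → G → A) x.g y.g) * z.u *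
          (c : G → G → A) (x.g * y.g) z.g
        = x.u * (y.u * z.u * (c : G → G → A) y.g z.g) *
          (c : G → G → A) x.g (y.g * z.g)
      calc x.u * y.u * (c : G → G → A) x.g y.g * z.u *
            (c : G → G → A) (x.g * y.g) z.g
          = x.u * y.u * z.u * ((c : G → G → A) x.g y.g *
            (c : G → G → A) (x.g * y.g) z.g) := by
            simp [mul_comm, mul_left_comm, mul_assoc]
        _ = x.u * y.u * z.u * ((c : G → G → A) y.g z.g *
            (c : G → G → A) x.g (y.g * z.g)) := by rw [h1]
        _ = x.u * (y.u * z.u * (c : G → G → A) y.g z.g) *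
            (c : G → G → A) x.g (y.g * z.g) := by
            simp [mul_comm, mul_left_comm, mul_assoc]
  one_mul x := by
    obtain ⟨h1, h2, h3⟩ := hcoc (c := c)
    ext
    · exact one_mul _
    · show 1 * x.u * (c : G → G → A) 1 x.g = x.u
      rw [h3, one_mul, mul_one]
  mul_one x := by
    obtain ⟨h1, h2, h3⟩ := hcoc (c := c)
    ext
    · exact mul_one _
    · show x.u * 1 * (c : G → G → A) x.g 1 = x.u
      rw [h2, mul_one, mul_one]
  inv_mul_cancel x := by
    obtain ⟨h1, h2, h3⟩ := hcoc (c := c)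
    have hsym : (c : G → G → A) x.g⁻¹ x.g = (c : G → G → A) x.g x.g⁻¹ := by
      have := h1 x.g x.g⁻¹ x.g
      rw [mul_inv_cancel, inv_mul_cancel, h2, h3, mul_one, mul_one] at this
      exact this.symm
    ext
    · exact inv_mul_cancel _
    · show (x.u * (c : G → G → A) x.g x.g⁻¹)⁻¹ * x.u *
          (c : G → G → A) x.g⁻¹ x.g = 1
      rw [hsym]; group

/-- Projection to `G`. -/
def proj (c : twoCocycles G A) : ExtG c →* G where
  toFun := ExtG.g
  map_one' := rfl
  map_mul' _ _ := rfl

/-- Inclusion of `A` as a central subgroup. -/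
def incl (c : twoCocycles G A) : A →* ExtG c where
  toFun u := ⟨1, u⟩
  map_one' := rfl
  map_mul' u v := by
    obtain ⟨h1, h2, h3⟩ := hcoc (c := c)
    ext
    · exact (one_mul _).symm
    · show u * v = u * v * (c : G → G → A) 1 1
      rw [h3, mul_one]

lemma incl_g (u : A) : (incl c u).g = 1 := rfl
lemma incl_u (u : A) : (incl c u).u = u := rfl

lemma incl_comm (u : A) (x : ExtG c) : incl c u * x = x * incl c u := by
  obtain ⟨h1, h2, h3⟩ := hcoc (c := c)
  ext
  · show 1 * x.g = x.g * 1
    rw [one_mul, mul_one]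
  · show u * x.u * (c : G → G → A) 1 x.g = x.u * u * (c : G → G → A) x.g 1
    rw [h2, h3, mul_one, mul_one, mul_comm]

lemma eq_incl {x : ExtG c} (h : x.g = 1) : x = incl c x.u := by
  ext
  · exact h
  · rfl

lemma incl_eq_one {u : A} (h : incl c u = 1) : u = 1 := congrArg ExtG.u h

lemma proj_pow (x : ExtG c) (n : ℕ) : (x ^ n).g = x.g ^ n := map_pow (proj c) x n

end ExtG

end ExtAux


/-- Let `G = C_p ⋊_r C_m` be the faithful split metacyclic group
(presented abstractly by generators `a, b` with `a^p = 1`, `b^m = 1`, `b a b⁻¹ = a^r`,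
every element of the form `a^i * b^j`, and `|G| = p·m`), and let `F` be a finite field
with `ℓ` elements, of characteristic different from `p`, such that `p ∤ ℓ - 1`.
Then `H²(G, Fˣ)` (with `Fˣ` a trivial `G`-module) is isomorphic as an abelian group to
`Fˣ/(Fˣ)^m`. -/
theorem h2_of_metacyclic (p m r ℓ : ℕ) (hp : p.Prime) (hodd : Odd p)
    (hm : 1 < m) (hmp : m ∣ p - 1)
    (hr : orderOf ((r : ZMod p)) = m)
    (G : Type) [Group G] (a b : G)
    (ha : orderOf a = p) (hb : orderOf b = m)
    (hrel : b * a * b⁻¹ = a ^ r)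
    (hgen : ∀ g : G, ∃ i j : ℕ, g = a ^ i * b ^ j)
    (hcard : Nat.card G = p * m)
    (F : Type) [Field F] [Fintype F]
    (hF : Fintype.card F = ℓ) (hchar : ringChar F ≠ p)
    (hptor : ¬ p ∣ (ℓ - 1)) :
    Nonempty (H2Group G Fˣ ≃* Fˣ ⧸ (powMonoidHom m : Fˣ →* Fˣ).range) := by
  classical
  have hm0 : 0 < m := by omega
  have hp2 := hp.two_le
  have hcardU : Nat.card Fˣ = ℓ - 1 := by
    rw [Nat.card_units, Nat.card_eq_fintype_card, hF]
  have hcop : (Nat.card Fˣ).Coprime p := by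
    rw [hcardU]
    exact ((Nat.Prime.coprime_iff_not_dvd hp).mpr hptor).symm
  have hpm : Nat.Coprime p m := by
    refine (Nat.Prime.coprime_iff_not_dvd hp).mpr fun hdvd => ?_
    have h1 : m ≤ p - 1 := Nat.le_of_dvd (by omega) hmp
    have h2 : p ≤ m := Nat.le_of_dvd hm0 hdvd
    omega
  have htf : ∀ v : Fˣ, v ^ p = 1 → v = 1 := by
    intro v hv
    have h1 : orderOf v ∣ p := orderOf_dvd_of_pow_eq_one hv
    have h2 : orderOf v ∣ Nat.card Fˣ := orderOf_dvd_natCard v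
    have h3 : orderOf v ∣ Nat.gcd (Nat.card Fˣ) p := Nat.dvd_gcd h2 h1
    rw [Nat.Coprime.gcd_eq_one hcop] at h3
    exact orderOf_eq_one_iff.mp (Nat.dvd_one.mp h3)
  have hroot : ∀ u : Fˣ, ∃ w : Fˣ, w ^ p = u := by
    intro u
    refine ⟨(powCoprime hcop).symm u, ?_⟩
    have := (powCoprime hcop).apply_symm_apply u
    simpa [powCoprime] using this
  -- triviality of ⟨a⟩ ∩ ⟨b⟩
  have hzord : ∀ x y : ℤ, a ^ x = b ^ y → a ^ x = 1 := by
    intro x y hxy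
    have hzp : (a ^ x) ^ p = 1 := by
      rw [← zpow_natCast (a ^ x) p, ← zpow_mul, mul_comm x (p : ℤ), zpow_mul,
        zpow_natCast a p, ← ha, pow_orderOf_eq_one, one_zpow]
    have hzm : (a ^ x) ^ m = 1 := by
      rw [hxy, ← zpow_natCast (b ^ y) m, ← zpow_mul, mul_comm y (m : ℤ), zpow_mul,
        zpow_natCast b m, ← hb, pow_orderOf_eq_one, one_zpow]
    have h1 : orderOf (a ^ x) ∣ p := orderOf_dvd_of_pow_eq_one hzp
    have h2 : orderOf (a ^ x) ∣ m := orderOf_dvd_of_pow_eq_one hzm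
    have h3 := Nat.dvd_gcd h1 h2
    rw [Nat.Coprime.gcd_eq_one hpm] at h3
    exact orderOf_eq_one_iff.mp (Nat.dvd_one.mp h3)
  -- uniqueness of reduced coordinates
  have huniq : ∀ i j k l : ℕ, i < p → k < p → j < m → l < m →
      a ^ i * b ^ j = a ^ k * b ^ l → i = k ∧ j = l := by
    intro i j k l hi hk hj hl heq
    have h0 : a ^ (i : ℤ) * b ^ (j : ℤ) = a ^ (k : ℤ) * b ^ (l : ℤ) := by
      simpa only [zpow_natCast] using heq
    have h1 : a ^ (k : ℤ) * a ^ ((i : ℤ) - k) * b ^ (j : ℤ)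
        = a ^ (k : ℤ) * b ^ ((l : ℤ) - j) * b ^ (j : ℤ) := by
      rw [← zpow_add, show (k : ℤ) + ((i : ℤ) - k) = (i : ℤ) by ring, mul_assoc,
        ← zpow_add, show (l : ℤ) - j + j = (l : ℤ) by ring]
      exact h0
    have h2 : a ^ ((i : ℤ) - k) = b ^ ((l : ℤ) - j) :=
      mul_left_cancel (mul_right_cancel h1)
    have h3 : a ^ ((i : ℤ) - k) = 1 := hzord _ _ h2
    have h4 : b ^ ((l : ℤ) - j) = 1 := h2 ▸ h3
    have h5 : ((p : ℕ) : ℤ) ∣ (i : ℤ) - k := by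
      have := orderOf_dvd_iff_zpow_eq_one.mpr h3
      rwa [ha] at this
    have h6 : ((m : ℕ) : ℤ) ∣ (l : ℤ) - j := by
      have := orderOf_dvd_iff_zpow_eq_one.mpr h4
      rwa [hb] at this
    constructor
    · have : (i : ℤ) - k = 0 :=
        Int.eq_zero_of_abs_lt_dvd h5 (abs_lt.mpr ⟨by omega, by omega⟩)
      omega
    · have : (l : ℤ) - j = 0 :=
        Int.eq_zero_of_abs_lt_dvd h6 (abs_lt.mpr ⟨by omega, by omega⟩)
      omega
  -- commutation rule in G
  have hbja : ∀ j n : ℕ, b ^ j * a ^ n = a ^ (n * r ^ j) * b ^ j := by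
    intro j
    induction j with
    | zero => intro n; simp
    | succ j ih =>
      intro n
      have hone : ∀ n : ℕ, b * a ^ n = a ^ (n * r) * b := by
        intro n
        have hcj : b * a ^ n * b⁻¹ = a ^ (n * r) := by
          calc b * a ^ n * b⁻¹ = (b * a * b⁻¹) ^ n := by rw [conj_pow]
            _ = (a ^ r) ^ n := by rw [hrel]
            _ = a ^ (n * r) := by rw [← pow_mul, mul_comm]
        calc b * a ^ n = b * a ^ n * b⁻¹ * b := by group
          _ = a ^ (n * r) * b := by rw [hcj]
      calc b ^ (j + 1) * a ^ n = b ^ j * (b * a ^ n) := by rw [pow_succ, mul_assoc]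
        _ = b ^ j * (a ^ (n * r) * b) := by rw [hone]
        _ = b ^ j * a ^ (n * r) * b := by rw [mul_assoc]
        _ = a ^ (n * r * r ^ j) * b ^ j * b := by rw [ih]
        _ = a ^ (n * r ^ (j + 1)) * b ^ (j + 1) := by
            rw [mul_assoc, ← pow_succ, show n * r * r ^ j = n * r ^ (j + 1) by ring]
  -- reduced coordinates
  choose i0 j0 hij0 using hgen
  obtain ⟨ci, cj, hrep, hcilt, hcjlt⟩ : ∃ ci cj : G → ℕ,
      (∀ g : G, g = a ^ ci g * b ^ cj g) ∧ (∀ g, ci g < p) ∧ (∀ g, cj g < m) := by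
    refine ⟨fun g => i0 g % p, fun g => j0 g % m, fun g => ?_,
      fun g => Nat.mod_lt _ hp.pos, fun g => Nat.mod_lt _ hm0⟩
    conv_lhs => rw [hij0 g]
    rw [← ha, pow_mod_orderOf, ← hb, pow_mod_orderOf]
  have hcoord : ∀ (g : G) (i j : ℕ), i < p → j < m →
      g = a ^ i * b ^ j → ci g = i ∧ cj g = j := by
    intro g i j hi hj hgij
    exact huniq (ci g) (cj g) i j (hcilt g) hi (hcjlt g) hj
      (by rw [← hrep g]; exact hgij)
  have hc1 : ci 1 = 0 ∧ cj 1 = 0 := hcoord 1 0 0 hp.pos hm0 (by simp)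
  have hcb : cj b = 1 := (hcoord b 0 1 hp.pos hm (by simp)).2
  have hcbj : ∀ j, j < m → cj (b ^ j) = j := fun j hj =>
    (hcoord (b ^ j) 0 j hp.pos hj (by rw [pow_zero, one_mul])).2
  have hprod : ∀ g h : G, ci (g * h) = (ci g + ci h * r ^ cj g) % p ∧
      cj (g * h) = (cj g + cj h) % m := by
    intro g h
    refine hcoord _ _ _ (Nat.mod_lt _ hp.pos) (Nat.mod_lt _ hm0) ?_
    calc g * h = a ^ ci g * b ^ cj g * (a ^ ci h * b ^ cj h) := by
          rw [← hrep g, ← hrep h]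
      _ = a ^ ci g * (b ^ cj g * a ^ ci h) * b ^ cj h := by group
      _ = a ^ ci g * (a ^ (ci h * r ^ cj g) * b ^ cj g) * b ^ cj h := by rw [hbja]
      _ = a ^ (ci g + ci h * r ^ cj g) * b ^ (cj g + cj h) := by
          rw [pow_add, pow_add]; group
      _ = a ^ ((ci g + ci h * r ^ cj g) % p) * b ^ ((cj g + cj h) % m) := by
          rw [← ha, pow_mod_orderOf, ← hb, pow_mod_orderOf]
  -- the standard cocycles
  have hemap : ∀ x y z : G, (cj x + cj y) / m + (cj (x * y) + cj z) / m
      = (cj y + cj z) / m + (cj x + cj (y * z)) / m := by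
    intro x y z
    rw [(hprod x y).2, (hprod y z).2]
    exact carry_cocycle_aux m (cj x) (cj y) (cj z) hm0
  have hsmem : ∀ α : Fˣ, (fun g h : G => α ^ ((cj g + cj h) / m)) ∈ twoCocycles G Fˣ := by
    intro α
    refine ⟨fun x y z => ?_, fun x => ?_, fun x => ?_⟩
    · show α ^ ((cj x + cj y) / m) * α ^ ((cj (x * y) + cj z) / m)
        = α ^ ((cj y + cj z) / m) * α ^ ((cj x + cj (y * z)) / m)
      rw [← pow_add, ← pow_add, hemap]
    · show α ^ ((cj x + cj 1) / m) = 1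
      rw [hc1.2, Nat.add_zero, Nat.div_eq_of_lt (hcjlt x), pow_zero]
    · show α ^ ((cj 1 + cj x) / m) = 1
      rw [hc1.2, Nat.zero_add, Nat.div_eq_of_lt (hcjlt x), pow_zero]
  obtain ⟨scoc, hsval⟩ : ∃ s : Fˣ →* twoCocycles G Fˣ,
      ∀ (α : Fˣ) (g h : G), ((s α : G → G → Fˣ)) g h = α ^ ((cj g + cj h) / m) := by
    refine ⟨{ toFun := fun α => ⟨fun g h => α ^ ((cj g + cj h) / m), hsmem α⟩
              map_one' := ?_
              map_mul' := ?_ }, fun α g h => rfl⟩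
    · refine Subtype.ext (funext fun g => funext fun h => ?_)
      show (1 : Fˣ) ^ ((cj g + cj h) / m) = 1
      rw [one_pow]
    · intro α β
      refine Subtype.ext (funext fun g => funext fun h => ?_)
      show (α * β) ^ ((cj g + cj h) / m)
        = α ^ ((cj g + cj h) / m) * β ^ ((cj g + cj h) / m)
      rw [mul_pow]
  set N := (twoCoboundaries G Fˣ).subgroupOf (twoCocycles G Fˣ) with hNdef
  set Ψ : Fˣ →* H2Group G Fˣ := (QuotientGroup.mk' N).comp scoc with hΨdef
  -- kernel computation
  have hker : Ψ.ker = (powMonoidHom m : Fˣ →* Fˣ).range := by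
    ext α
    rw [MonoidHom.mem_ker, hΨdef, MonoidHom.comp_apply, QuotientGroup.mk'_apply,
      QuotientGroup.eq_one_iff, MonoidHom.mem_range]
    constructor
    · intro hmemN
      have hmem : (scoc α : G → G → Fˣ) ∈ twoCoboundaries G Fˣ :=
        Subgroup.mem_subgroupOf.mp hmemN
      obtain ⟨t, ht1, ht⟩ := hmem
      have htb : ∀ j, j < m → t (b ^ j) = (t b) ^ j := by
        intro j
        induction j with
        | zero => intro _; rw [pow_zero, pow_zero]; exact ht1
        | succ j ih =>
          intro hj
          have hj' : j < m := by omega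
          have hz : α ^ ((cj (b ^ j) + cj b) / m)
              = t (b ^ j) * t b * (t (b ^ j * b))⁻¹ := by
            rw [← hsval α (b ^ j) b]; exact ht (b ^ j) b
          rw [hcbj j hj', hcb, Nat.div_eq_of_lt (by omega), pow_zero] at hz
          have hz2 : t (b ^ j * b) = t (b ^ j) * t b :=
            (mul_inv_eq_one.mp hz.symm).symm
          rw [pow_succ, hz2, ih hj', pow_succ]
      have hm1 : m - 1 < m := by omega
      have hz : α ^ ((cj (b ^ (m - 1)) + cj b) / m)
          = t (b ^ (m - 1)) * t b * (t (b ^ (m - 1) * b))⁻¹ := by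
        rw [← hsval α (b ^ (m - 1)) b]; exact ht (b ^ (m - 1)) b
      rw [hcbj (m - 1) hm1, hcb, show m - 1 + 1 = m by omega, Nat.div_self hm0,
        pow_one] at hz
      have hbm : b ^ (m - 1) * b = 1 := by
        rw [← pow_succ, show m - 1 + 1 = m by omega, ← hb, pow_orderOf_eq_one]
      rw [hbm, ht1, inv_one, mul_one, htb (m - 1) hm1] at hz
      refine ⟨t b, ?_⟩
      rw [powMonoidHom_apply, hz, ← pow_succ, show m - 1 + 1 = m by omega]
    · rintro ⟨β, hβ⟩
      rw [powMonoidHom_apply] at hβ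
      rw [Subgroup.mem_subgroupOf]
      refine ⟨fun g => β ^ cj g, by show β ^ cj 1 = 1; rw [hc1.2, pow_zero],
        fun g h => ?_⟩
      rw [hsval α g h, ← hβ]
      show (β ^ m) ^ ((cj g + cj h) / m) = β ^ cj g * β ^ cj h * (β ^ cj (g * h))⁻¹
      rw [(hprod g h).2]
      refine eq_mul_inv_of_mul_eq ?_
      rw [← pow_mul, ← pow_add, ← pow_add]
      congr 1
      have := Nat.div_add_mod (cj g + cj h) m
      omega
  -- surjectivity via the extension group
  have hsurj : Function.Surjective Ψ := by
    intro q
    obtain ⟨c, rfl⟩ := QuotientGroup.mk'_surjective N q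
    obtain ⟨hco, hco1, hco2⟩ : IsTwoCocycle G Fˣ (c : G → G → Fˣ) := c.2
    obtain ⟨w, hw⟩ := hroot (((⟨a, 1⟩ : ExtG c) ^ p).u)⁻¹
    set A0 : ExtG c := ⟨a, 1⟩ with hA0
    set B : ExtG c := ⟨b, 1⟩ with hB
    have hA0g : A0.g = a := rfl
    have hBg : B.g = b := rfl
    have hA0p : A0 ^ p = ExtG.incl c ((A0 ^ p).u) := ExtG.eq_incl (by
      rw [ExtG.proj_pow, hA0g, ← ha, pow_orderOf_eq_one])
    set at' : ExtG c := A0 * ExtG.incl c w with hat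
    have hcA0w : Commute A0 (ExtG.incl c w) := (ExtG.incl_comm w A0).symm
    have hatp : at' ^ p = 1 := by
      rw [hat, hcA0w.mul_pow, hA0p, ← map_pow, hw, ← map_mul, mul_inv_cancel, map_one]
    have hatg : at'.g = a := by rw [hat, ExtG.mul_g, hA0g, ExtG.incl_g, mul_one]
    have hatpow : ∀ n : ℕ, (at' ^ n).g = a ^ n := fun n => by
      rw [ExtG.proj_pow, hatg]
    have hBpow : ∀ n : ℕ, (B ^ n).g = b ^ n := fun n => by
      rw [ExtG.proj_pow, hBg]
    have hXg : (B * at' * B⁻¹ * (at' ^ r)⁻¹).g = 1 := by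
      simp only [ExtG.mul_g, ExtG.inv_g, hatg, hBg, hatpow]
      rw [hrel, mul_inv_cancel]
    have hXi : B * at' * B⁻¹ * (at' ^ r)⁻¹
        = ExtG.incl c ((B * at' * B⁻¹ * (at' ^ r)⁻¹).u) := ExtG.eq_incl hXg
    have hBA' : B * at' * B⁻¹
        = ExtG.incl c ((B * at' * B⁻¹ * (at' ^ r)⁻¹).u) * at' ^ r := by
      conv_lhs => rw [show B * at' * B⁻¹ = B * at' * B⁻¹ * (at' ^ r)⁻¹ * at' ^ r by group, hXi]
    have hvp : (B * at' * B⁻¹ * (at' ^ r)⁻¹).u = 1 := by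
      apply htf
      have h1 : (B * at' * B⁻¹) ^ p = 1 := by
        rw [conj_pow, hatp, mul_one, mul_inv_cancel]
      rw [hBA'] at h1
      have hcm : Commute (ExtG.incl c ((B * at' * B⁻¹ * (at' ^ r)⁻¹).u)) (at' ^ r) :=
        ExtG.incl_comm _ _
      rw [hcm.mul_pow, ← map_pow, ← pow_mul, mul_comm r p, pow_mul, hatp, one_pow,
        mul_one] at h1
      exact ExtG.incl_eq_one h1
    have hBA : B * at' * B⁻¹ = at' ^ r := by
      rw [hBA', hvp, map_one, one_mul]
    have hBat : ∀ k : ℕ, B * at' ^ k = at' ^ (k * r) * B := by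
      intro k
      have hc1' : B * at' ^ k * B⁻¹ = at' ^ (k * r) := by
        rw [← conj_pow, hBA, ← pow_mul, mul_comm r k]
      calc B * at' ^ k = B * at' ^ k * B⁻¹ * B := by group
        _ = at' ^ (k * r) * B := by rw [hc1']
    have hBjat : ∀ j k : ℕ, B ^ j * at' ^ k = at' ^ (k * r ^ j) * B ^ j := by
      intro j
      induction j with
      | zero => intro k; simp
      | succ j ih =>
        intro k
        calc B ^ (j + 1) * at' ^ k = B ^ j * (B * at' ^ k) := by
              rw [pow_succ, mul_assoc]
          _ = B ^ j * (at' ^ (k * r) * B) := by rw [hBat]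
          _ = B ^ j * at' ^ (k * r) * B := by rw [mul_assoc]
          _ = at' ^ (k * r * r ^ j) * B ^ j * B := by rw [ih]
          _ = at' ^ (k * r ^ (j + 1)) * B ^ (j + 1) := by
              rw [mul_assoc, ← pow_succ, show k * r * r ^ j = k * r ^ (j + 1) by ring]
    set α : Fˣ := (B ^ m).u with hαdef
    have hBm : B ^ m = ExtG.incl c α := ExtG.eq_incl (by
      rw [hBpow, ← hb, pow_orderOf_eq_one])
    have hatmod : ∀ x : ℕ, at' ^ x = at' ^ (x % p) := by
      intro x
      conv_lhs => rw [← Nat.div_add_mod x p]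
      rw [pow_add, pow_mul, hatp, one_pow, one_mul]
    have hBmod : ∀ y : ℕ, B ^ y = ExtG.incl c (α ^ (y / m)) * B ^ (y % m) := by
      intro y
      conv_lhs => rw [← Nat.div_add_mod y m]
      rw [pow_add, pow_mul, hBm, ← map_pow]
    obtain ⟨σ, hσspec⟩ : ∃ σ : G → ExtG c, ∀ g, σ g = at' ^ ci g * B ^ cj g :=
      ⟨_, fun g => rfl⟩
    have hσg : ∀ g : G, (σ g).g = g := by
      intro g
      rw [hσspec g, ExtG.mul_g, hatpow, hBpow, ← hrep]
    have hkey : ∀ g h : G, σ g * σ h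
        = ExtG.incl c (α ^ ((cj g + cj h) / m)) * σ (g * h) := by
      intro g h
      have h1 : σ g * σ h = at' ^ ((ci g + ci h * r ^ cj g) % p) *
          (ExtG.incl c (α ^ ((cj g + cj h) / m)) * B ^ ((cj g + cj h) % m)) := by
        rw [hσspec g, hσspec h]
        calc at' ^ ci g * B ^ cj g * (at' ^ ci h * B ^ cj h)
            = at' ^ ci g * (B ^ cj g * at' ^ ci h) * B ^ cj h := by group
          _ = at' ^ ci g * (at' ^ (ci h * r ^ cj g) * B ^ cj g) * B ^ cj h := by
              rw [hBjat]
          _ = at' ^ (ci g + ci h * r ^ cj g) * B ^ (cj g + cj h) := by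
              rw [pow_add, pow_add]; group
          _ = _ := by
              rw [hatmod (ci g + ci h * r ^ cj g), hBmod (cj g + cj h)]
      have h2 : σ (g * h) = at' ^ ((ci g + ci h * r ^ cj g) % p) *
          B ^ ((cj g + cj h) % m) := by
        rw [hσspec (g * h), (hprod g h).1, (hprod g h).2]
      rw [h1, h2, ← mul_assoc, ← ExtG.incl_comm, mul_assoc]
    have hτmul : ∀ g h : G, (σ g).u * (σ h).u * (c : G → G → Fˣ) g h
        = α ^ ((cj g + cj h) / m) * (σ (g * h)).u := by
      intro g h
      have h0 := congrArg ExtG.u (hkey g h)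
      rw [ExtG.mul_u, ExtG.mul_u, ExtG.incl_g, ExtG.incl_u, hσg g, hσg h,
        hσg (g * h), hco2, mul_one] at h0
      exact h0
    have hτ1 : (σ 1).u = 1 := by
      rw [hσspec 1, hc1.1, hc1.2, pow_zero, pow_zero, one_mul]
      exact ExtG.one_u
    refine ⟨α, ?_⟩
    rw [hΨdef, MonoidHom.comp_apply, QuotientGroup.mk'_eq_mk']
    refine ⟨(scoc α)⁻¹ * c, ?_, by group⟩
    rw [Subgroup.mem_subgroupOf]
    refine ⟨fun g => ((σ g).u)⁻¹, by show ((σ 1).u)⁻¹ = 1; rw [hτ1, inv_one],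
      fun g h => ?_⟩
    have hcoe : ((((scoc α)⁻¹ * c : twoCocycles G Fˣ)) : G → G → Fˣ) g h
        = ((scoc α : G → G → Fˣ) g h)⁻¹ * (c : G → G → Fˣ) g h := by
      rw [Subgroup.coe_mul, Subgroup.coe_inv]
      rfl
    rw [hcoe, hsval α g h]
    have hc' : (c : G → G → Fˣ) g h = ((σ g).u * (σ h).u)⁻¹ *
        (α ^ ((cj g + cj h) / m) * (σ (g * h)).u) := by
      rw [← hτmul g h]; group
    rw [hc', inv_inv]
    have : ∀ β x y z : Fˣ, β⁻¹ * ((x * y)⁻¹ * (β * z)) = x⁻¹ * y⁻¹ * z := by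
      intro β x y z
      rw [mul_left_comm ((x * y)⁻¹) β z, inv_mul_cancel_left, mul_inv]
    exact this _ _ _ _
  exact ⟨(QuotientGroup.quotientKerEquivOfSurjective Ψ hsurj).symm.trans
    (QuotientGroup.quotientMulEquivOfEq hker)⟩
end

section
/- The inflation homomorphism inf : H²(C_m, F^×) → H²(G, F^×) induced by the quotient homomorphism G → G/⟨a⟩ ≅ C_m (with F^× a trivial module for both groups) is an isomorphism of abelian groups. -/
section ExtGroup
variable {G : Type*} [Group G] {A : Type*} [CommGroup A]

@[ext] structure MyExt (c : twoCocycles G A) where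
  u : A
  x : G

namespace MyExt
variable {c : twoCocycles G A}

lemma cmem : IsTwoCocycle G A (c : G → G → A) := c.2

instance : Group (MyExt c) where
  mul e f := ⟨e.u * f.u * (c : G → G → A) e.x f.x, e.x * f.x⟩
  one := ⟨1, 1⟩
  inv e := ⟨(e.u * (c : G → G → A) e.x⁻¹ e.x)⁻¹, e.x⁻¹⟩
  mul_assoc e f g := by
    obtain ⟨h, h1, h2⟩ := (cmem (c := c))
    refine MyExt.ext ?_ (mul_assoc _ _ _)
    show e.u * f.u * (c : G → G → A) e.x f.x * g.u * (c : G → G → A) (e.x * f.x) g.x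
      = e.u * (f.u * g.u * (c : G → G → A) f.x g.x) * (c : G → G → A) e.x (f.x * g.x)
    rw [show e.u * f.u * (c : G → G → A) e.x f.x * g.u * (c : G → G → A) (e.x * f.x) g.x
      = e.u * f.u * g.u * ((c : G → G → A) e.x f.x * (c : G → G → A) (e.x * f.x) g.x) by simp [mul_comm, mul_left_comm, mul_assoc],
      h e.x f.x g.x]
    simp [mul_comm, mul_left_comm, mul_assoc]
  one_mul e := by
    refine MyExt.ext ?_ (one_mul _)
    show 1 * e.u * (c : G → G → A) 1 e.x = e.u
    rw [(cmem (c := c)).2.2 e.x]; simp [mul_comm, mul_left_comm, mul_assoc]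
  mul_one e := by
    refine MyExt.ext ?_ (mul_one _)
    show e.u * 1 * (c : G → G → A) e.x 1 = e.u
    rw [(cmem (c := c)).2.1 e.x]; simp [mul_comm, mul_left_comm, mul_assoc]
  inv_mul_cancel e := by
    refine MyExt.ext ?_ (inv_mul_cancel _)
    show (e.u * (c : G → G → A) e.x⁻¹ e.x)⁻¹ * e.u * (c : G → G → A) e.x⁻¹ e.x = 1
    simp [mul_comm, mul_left_comm, mul_assoc]

lemma mul_def (e f : MyExt c) :
    e * f = ⟨e.u * f.u * (c : G → G → A) e.x f.x, e.x * f.x⟩ := rfl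

lemma one_def : (1 : MyExt c) = ⟨1, 1⟩ := rfl


@[simp] lemma u_mul (e f : MyExt c) : (e * f).u = e.u * f.u * (c : G → G → A) e.x f.x := rfl
@[simp] lemma u_one : (1 : MyExt c).u = 1 := rfl

@[simp] lemma x_mul (e f : MyExt c) : (e * f).x = e.x * f.x := rfl
@[simp] lemma x_one : (1 : MyExt c).x = 1 := rfl

/-- the projection as a hom -/
def proj : MyExt c →* G where
  toFun e := e.x
  map_one' := rfl
  map_mul' _ _ := rfl

@[simp] lemma x_pow (e : MyExt c) (n : ℕ) : (e ^ n).x = e.x ^ n := by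
  exact (proj.map_pow e n)

@[simp] lemma x_zpow (e : MyExt c) (n : ℤ) : (e ^ n).x = e.x ^ n := by
  exact (proj.map_zpow e n)

@[simp] lemma x_inv (e : MyExt c) : (e⁻¹).x = e.x⁻¹ := rfl

/-- inclusion of A -/
def incl : A →* MyExt c where
  toFun u := ⟨u, 1⟩
  map_one' := rfl
  map_mul' u v := by
    refine MyExt.ext ?_ (one_mul 1).symm
    show u * v = u * v * (c : G → G → A) 1 1
    rw [(cmem (c := c)).2.1 1]; simp [mul_comm, mul_left_comm, mul_assoc]

@[simp] lemma incl_u (u : A) : (incl (c := c) u).u = u := rfl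
@[simp] lemma incl_x (u : A) : (incl (c := c) u).x = 1 := rfl

lemma incl_central (u : A) (e : MyExt c) : incl u * e = e * incl u := by
  refine MyExt.ext ?_ (by simp [one_mul, mul_one])
  show u * e.u * (c : G → G → A) 1 e.x = e.u * u * (c : G → G → A) e.x 1
  rw [(cmem (c := c)).2.1, (cmem (c := c)).2.2]; simp [mul_comm, mul_left_comm, mul_assoc]

lemma eq_incl_of_x_eq_one (e : MyExt c) (h : e.x = 1) : e = incl e.u := by
  refine MyExt.ext rfl h

lemma incl_injective : Function.Injective (incl (c := c)) := by
  intro u v h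
  simpa using congrArg MyExt.u h

end MyExt
end ExtGroup

lemma coboundary_isCocycle {G : Type*} [Group G] {A : Type*} [CommGroup A]
    (t : G → A) (ht1 : t 1 = 1) :
    IsTwoCocycle G A (fun x y => t x * t y * (t (x * y))⁻¹) := by
  refine ⟨fun x y z => ?_, fun x => ?_, fun x => ?_⟩
  · show (t x * t y * (t (x * y))⁻¹) * (t (x*y) * t z * (t ((x*y) * z))⁻¹)
      = (t y * t z * (t (y*z))⁻¹) * (t x * t (y*z) * (t (x * (y*z)))⁻¹)
    rw [mul_assoc x y z]
    simp [mul_comm, mul_left_comm, mul_assoc]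
  · show t x * t 1 * (t (x * 1))⁻¹ = 1
    simp [ht1]
  · show t 1 * t x * (t (1 * x))⁻¹ = 1
    simp [ht1]

lemma final_alg {A : Type*} [CommGroup A] (C D sx sy sxy : A)
    (h : D = C * (sx * sy * sxy⁻¹)) : C = D * (sx⁻¹ * sy⁻¹ * (sxy⁻¹)⁻¹) := by
  subst h
  have : sx * sy * sxy⁻¹ * (sx⁻¹ * sy⁻¹ * sxy) = 1 := by
    rw [show sx * sy * sxy⁻¹ * (sx⁻¹ * sy⁻¹ * sxy)
        = (sx * sx⁻¹) * ((sy * sy⁻¹) * (sxy⁻¹ * sxy)) by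
      simp only [mul_comm, mul_left_comm, mul_assoc]]
    simp
  calc C = C * (sx * sy * sxy⁻¹ * (sx⁻¹ * sy⁻¹ * sxy)) := by rw [this, mul_one]
    _ = C * (sx * sy * sxy⁻¹) * (sx⁻¹ * sy⁻¹ * (sxy⁻¹)⁻¹) := by
        rw [inv_inv]
        group

set_option maxHeartbeats 1000000 in
open MyExt in
lemma surj_aux {G : Type*} [Group G] {A : Type*} [CommGroup A] {p : ℕ}
    (a : G) (ha : orderOf a = p) [hN : (Subgroup.zpowers a).Normal]
    (hA1 : ∀ v : A, v ^ p = 1 → v = 1)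
    (hroot : ∀ z : A, ∃ u : A, u ^ p = z)
    (c' : twoCocycles G A) :
    ∃ (c : twoCocycles (G ⧸ Subgroup.zpowers a) A) (t : G → A), t 1 = 1 ∧
      ∀ x y : G, (c' : G → G → A) x y =
        (c : (G ⧸ Subgroup.zpowers a) → (G ⧸ Subgroup.zpowers a) → A)
          (QuotientGroup.mk x) (QuotientGroup.mk y) * (t x * t y * (t (x * y))⁻¹) := by
  classical
  obtain ⟨hco, hco1, hco2⟩ : IsTwoCocycle G A (c' : G → G → A) := c'.2
  set N := Subgroup.zpowers a with hNdef
  have hap : a ^ p = 1 := by rw [← ha]; exact pow_orderOf_eq_one a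
  -- the central element e of order dividing p lifting a
  set e₀ : MyExt c' := ⟨1, a⟩ with he₀
  obtain ⟨u, hu⟩ := hroot ((e₀ ^ p).u)⁻¹
  set e : MyExt c' := incl u * e₀ with he
  have he_x : e.x = a := by
    show (1 : G) * a = a
    exact one_mul a
  have hcomm : ∀ (v : A) (w : MyExt c'), Commute (incl v) w := fun v w => incl_central v w
  have hep : e ^ p = 1 := by
    have h1 : (incl u * e₀) ^ p = (incl u) ^ p * e₀ ^ p := (hcomm u e₀).mul_pow p
    have h2 : (e₀ ^ p).x = 1 := by rw [x_pow, he₀, hap]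
    have h3 : e₀ ^ p = incl ((e₀ ^ p).u) := eq_incl_of_x_eq_one _ h2
    rw [he, h1, ← map_pow, h3, ← map_mul, hu, inv_mul_cancel, map_one]
  have hek : ∀ k : ℤ, a ^ k = 1 → e ^ k = 1 := by
    intro k hk
    obtain ⟨j, rfl⟩ : (p : ℤ) ∣ k := by
      rw [← ha]; exact orderOf_dvd_iff_zpow_eq_one.2 hk
    rw [zpow_mul, zpow_natCast, hep, one_zpow]
  have hekp : ∀ k : ℤ, (e ^ k) ^ p = 1 := by
    intro k
    rw [← zpow_natCast (e ^ k) p, ← zpow_mul, mul_comm k (p:ℤ), zpow_mul,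
      zpow_natCast e p, hep, one_zpow]
  -- elements of order dividing p over N are powers of e
  have hP : ∀ f : MyExt c', f.x ∈ N → f ^ p = 1 → ∃ k : ℤ, f = e ^ k := by
    intro f hfx hfp
    obtain ⟨k, hk⟩ := Subgroup.mem_zpowers_iff.1 hfx
    refine ⟨k, ?_⟩
    set g : MyExt c' := f * (e ^ k)⁻¹ with hg
    have hgx : g.x = 1 := by
      rw [hg, x_mul, x_inv, x_zpow, he_x, hk, mul_inv_cancel]
    have hgi : g = incl g.u := eq_incl_of_x_eq_one _ hgx
    have hfg : f = incl g.u * e ^ k := by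
      rw [← hgi, hg, inv_mul_cancel_right]
    have h1 : (1 : MyExt c') = incl (g.u ^ p) := by
      rw [← hfp, hfg, (hcomm g.u (e ^ k)).mul_pow, hekp, mul_one, map_pow]
    have hgu : g.u ^ p = 1 := incl_injective (c := c') (by rw [← h1, map_one])
    rw [hfg, hA1 _ hgu, map_one, one_mul]
  have hConjP : ∀ (g : MyExt c') (k : ℤ), ∃ k' : ℤ, g * e ^ k * g⁻¹ = e ^ k' := by
    intro g k
    refine hP _ ?_ ?_
    · show (g * e ^ k * g⁻¹).x ∈ N
      have hx : (g * e ^ k * g⁻¹).x = g.x * a ^ k * g.x⁻¹ := by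
        rw [x_mul, x_mul, x_inv, x_zpow, he_x]
      rw [hx]
      exact hN.conj_mem _ (Subgroup.zpow_mem N (Subgroup.mem_zpowers a) k) g.x
    · rw [conj_pow, hekp, mul_one, mul_inv_cancel]
  -- section of the quotient map
  set Q := G ⧸ N with hQ
  set σ : Q → G := fun q => if q = 1 then 1 else q.out with hσdef
  have hσ : ∀ q : Q, QuotientGroup.mk (σ q) = q := by
    intro q
    by_cases h : q = 1
    · simp [hσdef, h]
    · simp [hσdef, h, QuotientGroup.out_eq']
  have hσ1 : σ 1 = 1 := if_pos rfl
  have hν : ∀ x : G, ∃ k : ℤ, a ^ k = x * (σ (QuotientGroup.mk x))⁻¹ := by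
    intro x
    refine Subgroup.mem_zpowers_iff.1 ?_
    rw [← QuotientGroup.eq_one_iff (G := G) (N := N)]
    rw [QuotientGroup.mk_mul, QuotientGroup.mk_inv, hσ, mul_inv_cancel]
  choose kk hkk using hν
  -- the canonical lift
  set lam : G → MyExt c' := fun x => e ^ (kk x) * ⟨1, σ (QuotientGroup.mk x)⟩ with hlamdef
  have hlamx : ∀ x : G, (lam x).x = x := by
    intro x
    show (e ^ kk x).x * σ (QuotientGroup.mk x) = x
    rw [x_zpow, he_x, hkk x, inv_mul_cancel_right]
  have hmk1 : QuotientGroup.mk (1 : G) = (1 : Q) := QuotientGroup.mk_one N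
  have hlam1 : lam 1 = 1 := by
    have h1 : a ^ (kk 1) = 1 := by
      rw [hkk 1, hmk1, hσ1]
      simp
    show e ^ kk 1 * (⟨1, σ (QuotientGroup.mk 1)⟩ : MyExt c') = 1
    rw [hek _ h1, one_mul, hmk1, hσ1]
    rfl
  have hlamcoset : ∀ (x n : G), n ∈ N → ∃ k : ℤ, lam (x * n) = e ^ k * lam x := by
    intro x n hn
    have hmk : QuotientGroup.mk (x * n) = (QuotientGroup.mk x : Q) := by
      rw [QuotientGroup.mk_mul, (QuotientGroup.eq_one_iff n).2 hn, mul_one]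
    refine ⟨kk (x * n) - kk x, ?_⟩
    show e ^ kk (x*n) * (⟨1, σ (QuotientGroup.mk (x*n))⟩ : MyExt c')
      = e ^ (kk (x*n) - kk x) * (e ^ kk x * ⟨1, σ (QuotientGroup.mk x)⟩)
    rw [hmk, ← mul_assoc, ← zpow_add, sub_add_cancel]
  -- the descended cocycle data
  set d : G → G → A := fun x y => (lam x * lam y * (lam (x * y))⁻¹).u with hddef
  have hdincl : ∀ x y : G, lam x * lam y * (lam (x * y))⁻¹ = incl (d x y) := by
    intro x y
    refine eq_incl_of_x_eq_one _ ?_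
    rw [x_mul, x_mul, x_inv, hlamx, hlamx, hlamx, mul_inv_cancel]
  have hd_mk : ∀ x y x' y' : G, (QuotientGroup.mk x : Q) = QuotientGroup.mk x' →
      (QuotientGroup.mk y : Q) = QuotientGroup.mk y' → d x y = d x' y' := by
    have key : ∀ (x n y m : G), n ∈ N → m ∈ N → d (x * n) (y * m) = d x y := by
      intro x n y m hn hm
      obtain ⟨k₁, h1⟩ := hlamcoset x n hn
      obtain ⟨k₂, h2⟩ := hlamcoset y m hm
      have hn' : y⁻¹ * n * y * m ∈ N := by
        refine N.mul_mem ?_ hm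
        have h := hN.conj_mem n hn y⁻¹
        simpa using h
      obtain ⟨k₃, h3⟩ := hlamcoset (x * y) (y⁻¹ * n * y * m) hn'
      have harg : x * n * (y * m) = x * y * (y⁻¹ * n * y * m) := by group
      obtain ⟨k₂', hk₂'⟩ := hConjP (lam x) k₂
      obtain ⟨k₃', h3'⟩ := hConjP (lam (x * y))⁻¹ (-k₃)
      rw [zpow_neg] at h3'
      obtain ⟨k₄, h4⟩ := hConjP (lam x * lam y) k₃'
      have step : incl (d (x * n) (y * m)) =
          incl (d x y) * e ^ (k₁ + k₂' + k₄) := by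
        calc incl (d (x * n) (y * m))
            = lam (x*n) * lam (y*m) * (lam (x*n*(y*m)))⁻¹ := (hdincl _ _).symm
          _ = (e^k₁ * lam x) * (e^k₂ * lam y) * (e^k₃ * lam (x*y))⁻¹ := by
              rw [harg, h1, h2, h3]
          _ = e^k₁ * (lam x * e^k₂ * (lam x)⁻¹) * (lam x * lam y)
              * ((lam (x*y))⁻¹ * (e^k₃)⁻¹ * ((lam (x*y))⁻¹)⁻¹) * (lam (x*y))⁻¹ := by
              group
          _ = e^k₁ * e^k₂' * (lam x * lam y) * e^k₃' * (lam (x*y))⁻¹ := by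
              rw [hk₂', h3']
          _ = e^k₁ * e^k₂' * ((lam x * lam y) * e^k₃' * (lam x * lam y)⁻¹)
              * (lam x * lam y * (lam (x*y))⁻¹) := by group
          _ = e^k₁ * e^k₂' * e^k₄ * incl (d x y) := by rw [h4, hdincl]
          _ = incl (d x y) * (e ^ k₁ * e ^ k₂' * e ^ k₄) :=
              ((hcomm (d x y) (e ^ k₁ * e ^ k₂' * e ^ k₄)).eq).symm
          _ = incl (d x y) * e ^ (k₁ + k₂' + k₄) := by
              group
      have hxK : a ^ (k₁ + k₂' + k₄) = 1 := by
        have hx := congrArg MyExt.x step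
        rw [x_mul, incl_x, incl_x, x_zpow, he_x, one_mul] at hx
        exact hx.symm
      have hfin : (incl (d (x * n) (y * m)) : MyExt c') = incl (d x y) := by
        rw [step, hek _ hxK, mul_one]
      exact incl_injective hfin
    intro x y x' y' hx hy
    have hx' : x' = x * (x⁻¹ * x') := by group
    have hy' : y' = y * (y⁻¹ * y') := by group
    rw [hx', hy', key x _ y _ (QuotientGroup.eq.1 hx) (QuotientGroup.eq.1 hy)]
  -- d is a normalized cocycle
  have hlam1u : (lam 1).u = 1 := by rw [hlam1]; rfl
  -- relation between d and c'
  have hd_c' : ∀ x y : G, d x y * (lam (x*y)).u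
      = (lam x).u * (lam y).u * (c' : G → G → A) x y := by
    intro x y
    have heq : incl (d x y) * lam (x * y) = lam x * lam y := by
      rw [← hdincl]; group
    have hu' := congrArg MyExt.u heq
    simp only [u_mul, incl_u, incl_x, hlamx, hco2, mul_one] at hu'
    exact hu'
  set s : G → A := fun x => (lam x).u with hsdef
  have hs1 : s 1 = 1 := hlam1u
  have hd_eq : ∀ x y : G, d x y = (c' : G → G → A) x y * (s x * s y * (s (x * y))⁻¹) := by
    intro x y
    have h2 : d x y = (lam x).u * (lam y).u * (c' : G → G → A) x y * ((lam (x*y)).u)⁻¹ :=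
      eq_mul_inv_of_mul_eq (hd_c' x y)
    rw [h2]
    simp [hsdef, mul_comm, mul_left_comm, mul_assoc]
  have hd_cocycle : IsTwoCocycle G A d := by
    have hbnd : (fun (x y : G) => s x * s y * (s (x * y))⁻¹) ∈ twoCocycles G A :=
      coboundary_isCocycle s hs1
    have hmem := (twoCocycles G A).mul_mem c'.2 hbnd
    have hfun : d = (c' : G → G → A) * (fun (x y : G) => s x * s y * (s (x * y))⁻¹) :=
      funext fun x => funext fun y => hd_eq x y
    rw [hfun]
    exact hmem
  obtain ⟨hd_co, hd_n1, hd_1n⟩ := hd_cocycle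
  -- descend to the quotient
  set cq : Q → Q → A := fun q q' => d (σ q) (σ q') with hcqdef
  have hcq_mk : ∀ x y : G, cq (QuotientGroup.mk x) (QuotientGroup.mk y) = d x y := by
    intro x y
    exact hd_mk _ _ _ _ (hσ _) (hσ _)
  have hmkmul : ∀ x y : G, (QuotientGroup.mk (x * y) : Q)
      = QuotientGroup.mk x * QuotientGroup.mk y := fun x y => QuotientGroup.mk_mul N x y
  have hcq_co : IsTwoCocycle Q A cq := by
    refine ⟨fun q q' q'' => ?_, fun q => ?_, fun q => ?_⟩
    · obtain ⟨x, rfl⟩ := QuotientGroup.mk_surjective q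
      obtain ⟨y, rfl⟩ := QuotientGroup.mk_surjective q'
      obtain ⟨z, rfl⟩ := QuotientGroup.mk_surjective q''
      rw [← hmkmul, ← hmkmul, hcq_mk, hcq_mk, hcq_mk, hcq_mk]
      exact hd_co x y z
    · show cq q (QuotientGroup.mk (1:G)) = 1
      obtain ⟨x, rfl⟩ := QuotientGroup.mk_surjective q
      rw [hcq_mk, hd_n1]
    · show cq (QuotientGroup.mk (1:G)) q = 1
      obtain ⟨x, rfl⟩ := QuotientGroup.mk_surjective q
      rw [hcq_mk, hd_1n]
  refine ⟨⟨cq, hcq_co⟩, fun x => ((lam x).u)⁻¹, by simp [hlam1u], ?_⟩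
  intro x y
  show (c' : G → G → A) x y
    = cq (QuotientGroup.mk x) (QuotientGroup.mk y)
      * ((s x)⁻¹ * (s y)⁻¹ * (((s (x*y))⁻¹)⁻¹))
  rw [hcq_mk]
  exact final_alg _ _ _ _ _ (hd_eq x y)

lemma pullback_isCocycle {G H : Type*} [Group G] [Group H] {A : Type*} [CommGroup A]
    (f : G →* H) (c : twoCocycles H A) :
    (fun x y => (c : H → H → A) (f x) (f y)) ∈ twoCocycles G A := by
  obtain ⟨h, h1, h2⟩ : IsTwoCocycle H A (c : H → H → A) := c.2
  refine ⟨fun x y z => ?_, fun x => ?_, fun x => ?_⟩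
  · show (c : H → H → A) (f x) (f y) * (c : H → H → A) (f (x * y)) (f z)
      = (c : H → H → A) (f y) (f z) * (c : H → H → A) (f x) (f (y * z))
    rw [map_mul, map_mul]
    exact h (f x) (f y) (f z)
  · show (c : H → H → A) (f x) (f 1) = 1
    rw [map_one]
    exact h1 (f x)
  · show (c : H → H → A) (f 1) (f x) = 1
    rw [map_one]
    exact h2 (f x)


/-- With `G = C_p ⋊_r C_m` the faithful split metacyclic group and
`F` a finite field with `ℓ` elements, of characteristic different from `p` and with
`p ∤ ℓ - 1`, the inflation homomorphism
`inf : H²(C_m, Fˣ) → H²(G, Fˣ)` induced by the quotient map `G → G/⟨a⟩ ≅ C_m`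
(trivial coefficients `Fˣ` on both sides) is an isomorphism of abelian groups.
Here the inflation map is characterised by: the class of a cocycle `c` on `G/⟨a⟩`
is sent to the class of the pullback cocycle `(x, y) ↦ c (x̄, ȳ)` on `G`. -/
theorem inflation_bijective (p m r ℓ : ℕ) (hp : p.Prime) (hodd : Odd p)
    (hm : 1 < m) (hmp : m ∣ p - 1)
    (hr : orderOf ((r : ZMod p)) = m)
    (G : Type) [Group G] (a b : G)
    (ha : orderOf a = p) (hb : orderOf b = m)
    (hrel : b * a * b⁻¹ = a ^ r)
    (hgen : ∀ g : G, ∃ i j : ℕ, g = a ^ i * b ^ j)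
    (hcard : Nat.card G = p * m)
    (F : Type) [Field F] [Fintype F]
    (hF : Fintype.card F = ℓ) (hchar : ringChar F ≠ p)
    (hptor : ¬ p ∣ (ℓ - 1))
    [hN : (Subgroup.zpowers a).Normal]
    (infl : H2Group (G ⧸ Subgroup.zpowers a) Fˣ →* H2Group G Fˣ)
    (hinfl : ∀ (c : twoCocycles (G ⧸ Subgroup.zpowers a) Fˣ) (c' : twoCocycles G Fˣ),
      (∀ x y : G, (c' : G → G → Fˣ) x y =
        (c : (G ⧸ Subgroup.zpowers a) → (G ⧸ Subgroup.zpowers a) → Fˣ)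
          (QuotientGroup.mk x) (QuotientGroup.mk y)) →
      infl (QuotientGroup.mk c) = QuotientGroup.mk c') :
    Function.Bijective infl := by
  classical
  have hcardF : Nat.card Fˣ = ℓ - 1 := by
    rw [Nat.card_units, Nat.card_eq_fintype_card, hF]
  have hA1 : ∀ v : Fˣ, v ^ p = 1 → v = 1 := by
    intro v hv
    have h1 : orderOf v ∣ p := orderOf_dvd_of_pow_eq_one hv
    have h2 : orderOf v ∣ ℓ - 1 := hcardF ▸ orderOf_dvd_natCard v
    rcases hp.eq_one_or_self_of_dvd _ h1 with h | h
    · exact orderOf_eq_one_iff.1 h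
    · exact absurd (h ▸ h2) hptor
  have hroot : ∀ z : Fˣ, ∃ u : Fˣ, u ^ p = z := by
    have hinj : Function.Injective (fun u : Fˣ => u ^ p) := by
      intro u w h
      have h2 : (u * w⁻¹) ^ p = 1 := by
        rw [mul_pow, inv_pow, show u ^ p = w ^ p from h, mul_inv_cancel]
      exact mul_inv_eq_one.1 (hA1 _ h2)
    intro z
    exact Finite.surjective_of_injective hinj z
  have hap : a ^ p = 1 := by rw [← ha]; exact pow_orderOf_eq_one a
  constructor
  · -- injectivity
    refine (injective_iff_map_eq_one infl).2 ?_
    intro ξ hξ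
    induction ξ using QuotientGroup.induction_on with
    | _ c =>
    obtain ⟨hcc, hc1, hc2⟩ :
        IsTwoCocycle _ Fˣ (c : (G ⧸ Subgroup.zpowers a) → (G ⧸ Subgroup.zpowers a) → Fˣ) := c.2
    set c'' : twoCocycles G Fˣ :=
      ⟨fun x y => (c : (G ⧸ Subgroup.zpowers a) → (G ⧸ Subgroup.zpowers a) → Fˣ)
          (QuotientGroup.mk x) (QuotientGroup.mk y),
        pullback_isCocycle (QuotientGroup.mk' (Subgroup.zpowers a)) c⟩ with hc''def
    rw [hinfl c c'' (fun x y => rfl)] at hξ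
    rw [QuotientGroup.eq_one_iff, Subgroup.mem_subgroupOf] at hξ
    obtain ⟨t, ht1, ht⟩ := hξ
    have ht' : ∀ x y : G,
        (c : (G ⧸ Subgroup.zpowers a) → (G ⧸ Subgroup.zpowers a) → Fˣ)
          (QuotientGroup.mk x) (QuotientGroup.mk y) = t x * t y * (t (x * y))⁻¹ :=
      fun x y => ht x y
    have htmul : ∀ n n' : G, n ∈ Subgroup.zpowers a → n' ∈ Subgroup.zpowers a →
        t (n * n') = t n * t n' := by
      intro n n' hn hn'
      have h := (ht' n n').symm
      rw [(QuotientGroup.eq_one_iff n).2 hn, (QuotientGroup.eq_one_iff n').2 hn', hc2 1] at h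
      exact (mul_inv_eq_one.1 h).symm
    have hta : ∀ k : ℕ, t (a ^ k) = (t a) ^ k := by
      intro k
      induction k with
      | zero => simpa using ht1
      | succ k ih =>
        rw [pow_succ, pow_succ, htmul _ _ (Subgroup.pow_mem _ (Subgroup.mem_zpowers a) k)
          (Subgroup.mem_zpowers a), ih]
    have htap : t a = 1 := by
      refine hA1 _ ?_
      rw [← hta p, hap, ht1]
    have htN : ∀ n : G, n ∈ Subgroup.zpowers a → t n = 1 := by
      intro n hn
      obtain ⟨k, hk⟩ := Subgroup.mem_zpowers_iff.1 hn
      have hknn : (0:ℤ) ≤ k % (p:ℤ) := Int.emod_nonneg k (by exact_mod_cast hp.ne_zero)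
      have hk2 : a ^ ((k % (p:ℤ)).toNat) = n := by
        rw [← hk, ← zpow_natCast, Int.toNat_of_nonneg hknn, ← ha, zpow_mod_orderOf]
      rw [← hk2, hta, htap, one_pow]
    have htcoset : ∀ x y : G,
        (QuotientGroup.mk x : G ⧸ Subgroup.zpowers a) = QuotientGroup.mk y → t x = t y := by
      intro x y hxy
      have hn : x⁻¹ * y ∈ Subgroup.zpowers a := QuotientGroup.eq.1 hxy
      have h := (ht' x (x⁻¹ * y)).symm
      rw [show (QuotientGroup.mk (x⁻¹ * y) : G ⧸ Subgroup.zpowers a) = 1 from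
        (QuotientGroup.eq_one_iff _).2 hn, hc1, htN _ hn, mul_one, mul_inv_cancel_left] at h
      exact mul_inv_eq_one.1 h
    rw [QuotientGroup.eq_one_iff, Subgroup.mem_subgroupOf]
    refine ⟨fun q => t q.out, ?_, ?_⟩
    · have h1 : (QuotientGroup.mk ((1 : G ⧸ Subgroup.zpowers a).out) :
          G ⧸ Subgroup.zpowers a) = QuotientGroup.mk (1 : G) := by
        rw [QuotientGroup.out_eq', QuotientGroup.mk_one]
      show t (Quotient.out (1 : G ⧸ Subgroup.zpowers a)) = 1
      rw [htcoset _ _ h1, ht1]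
    · intro q q'
      obtain ⟨x, rfl⟩ := QuotientGroup.mk_surjective q
      obtain ⟨y, rfl⟩ := QuotientGroup.mk_surjective q'
      have e1 : t (QuotientGroup.mk x : G ⧸ Subgroup.zpowers a).out = t x :=
        htcoset _ _ (QuotientGroup.out_eq' _)
      have e2 : t (QuotientGroup.mk y : G ⧸ Subgroup.zpowers a).out = t y :=
        htcoset _ _ (QuotientGroup.out_eq' _)
      have e3 : t ((QuotientGroup.mk x * QuotientGroup.mk y :
          G ⧸ Subgroup.zpowers a)).out = t (x * y) := by
        refine htcoset _ _ ?_
        rw [QuotientGroup.out_eq', QuotientGroup.mk_mul]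
      show (c : (G ⧸ Subgroup.zpowers a) → (G ⧸ Subgroup.zpowers a) → Fˣ)
          (QuotientGroup.mk x) (QuotientGroup.mk y)
        = t (Quotient.out (QuotientGroup.mk x : G ⧸ Subgroup.zpowers a))
          * t (Quotient.out (QuotientGroup.mk y : G ⧸ Subgroup.zpowers a))
          * (t (Quotient.out ((QuotientGroup.mk x : G ⧸ Subgroup.zpowers a)
              * QuotientGroup.mk y)))⁻¹
      rw [e1, e2, e3, ht' x y]
  · -- surjectivity
    intro η
    induction η using QuotientGroup.induction_on with
    | _ c' =>
    obtain ⟨c, t, ht1, hrel2⟩ := surj_aux a ha hA1 hroot c'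
    set c'' : twoCocycles G Fˣ :=
      ⟨fun x y => (c : (G ⧸ Subgroup.zpowers a) → (G ⧸ Subgroup.zpowers a) → Fˣ)
          (QuotientGroup.mk x) (QuotientGroup.mk y),
        pullback_isCocycle (QuotientGroup.mk' (Subgroup.zpowers a)) c⟩ with hc''def
    refine ⟨QuotientGroup.mk c, ?_⟩
    rw [hinfl c c'' (fun x y => rfl)]
    rw [QuotientGroup.eq, Subgroup.mem_subgroupOf]
    refine ⟨t, ht1, fun x y => ?_⟩
    show ((c''⁻¹ * c' : twoCocycles G Fˣ) : G → G → Fˣ) x y = t x * t y * (t (x * y))⁻¹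
    have hval : ((c''⁻¹ * c' : twoCocycles G Fˣ) : G → G → Fˣ) x y
        = (((c'' : G → G → Fˣ) x y)⁻¹) * (c' : G → G → Fˣ) x y := rfl
    rw [hval, hrel2 x y]
    exact inv_mul_cancel_left _ _
end

section
/- Suppose the action of H on K is faithful, i.e. σ is injective. Then the center of B equals {x · 1_B : x ∈ K, σ_τ(x) = x for all τ ∈ H}, the image in B of the fixed field K^{σ(H)} of H acting on K. -/
/-- Let `K` be a field, `F` a subfield, `H` a finite group acting
faithfully on `K` by `F`-algebra automorphisms via `σ : H → Aut_F(K)` (i.e. `σ`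
injective), `α` a normalized 2-cocycle with values in `Fˣ` (trivial action), and let
`B = (K, H, σ, α)` be a crossed product. Then the center of `B` equals
`{x · 1_B : x ∈ K, σ_τ(x) = x for all τ ∈ H}`, the image in `B` of the fixed field
`K^{σ(H)}`. -/
theorem crossedProduct_center (F K : Type) [Field F] [Field K] [Algebra F K]
    (H : Type) [Group H] [Finite H]
    (σ : H →* (K ≃ₐ[F] K)) (hσ : Function.Injective σ)
    (α : H → H → Fˣ)
    (hcoc : ∀ x y z : H, α x y * α (x * y) z = α y z * α x (y * z))
    (hnorm : ∀ x : H, α x 1 = 1 ∧ α 1 x = 1)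
    (B : Type) [Ring B] [Algebra F B]
    (ιK : K →ₐ[F] B) (hιK : Function.Injective ιK)
    (u : H → B) (hu1 : u 1 = 1)
    (huσ : ∀ (τ : H) (x : K), u τ * ιK x = ιK (σ τ x) * u τ)
    (huu : ∀ τ τ' : H, u τ * u τ' = algebraMap F B ((α τ τ' : F)) * u (τ * τ'))
    (hufree : ∀ x : B, ∃! c : H →₀ K, x = c.sum fun τ y => ιK y * u τ) :
    Set.center B = ⇑ιK '' {x : K | ∀ τ : H, σ τ x = x} := by
  classical
  have : Fintype H := Fintype.ofFinite H
  set S : (H → K) → B := fun c => ∑ τ : H, ιK (c τ) * u τ with hS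
  -- any finsupp sum equals the full sum
  have hfs : ∀ c : H →₀ K, (c.sum fun τ y => ιK y * u τ) = S (fun τ => c τ) := by
    intro c
    rw [Finsupp.sum_fintype]
    intro τ; simp
  have uniq : ∀ d d' : H → K, S d = S d' → d = d' := by
    intro d d' h
    have hd := hfs (Finsupp.equivFunOnFinite.symm d)
    have hd' := hfs (Finsupp.equivFunOnFinite.symm d')
    simp only [Finsupp.coe_equivFunOnFinite_symm] at hd hd'
    have h2 : Finsupp.equivFunOnFinite.symm d = Finsupp.equivFunOnFinite.symm d' :=
      (hufree (S d)).unique hd.symm (h.trans hd'.symm)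
    have := congrArg (fun c => Finsupp.equivFunOnFinite c) h2
    simpa using this
  have hsingle : ∀ (τ' : H) (v : K), S (Pi.single τ' v) = ιK v * u τ' := by
    intro τ' v
    simp only [hS]
    rw [Fintype.sum_eq_single τ']
    · simp
    · intro τ hτ; rw [Pi.single_eq_of_ne hτ]; simp
  ext b
  constructor
  · intro hb
    have hbcomm : ∀ g : B, g * b = b * g := fun g =>
      (Semigroup.mem_center_iff.mp hb g)
    obtain ⟨c, hc, -⟩ := hufree b
    rw [hfs] at hc
    -- commuting with ιK x
    have key : ∀ (x : K) (τ : H), x * c τ = (c τ) * σ τ x := by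
      intro x τ
      have h1 : b * ιK x = S (fun τ => c τ * σ τ x) := by
        rw [hc]
        simp only [hS]
        rw [Finset.sum_mul]
        refine Finset.sum_congr rfl fun τ _ => ?_
        rw [mul_assoc, huσ, map_mul, mul_assoc]
      have h2 : ιK x * b = S (fun τ => x * c τ) := by
        rw [hc]
        simp only [hS]
        rw [Finset.mul_sum]
        refine Finset.sum_congr rfl fun τ _ => ?_
        rw [map_mul, mul_assoc]
      have := uniq _ _ (h2 ▸ h1 ▸ (hbcomm (ιK x)))
      exact congrFun this τ
    -- c τ = 0 for τ ≠ 1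
    have hzero : ∀ τ : H, τ ≠ 1 → c τ = 0 := by
      intro τ hτ
      by_contra hne
      apply hτ
      apply hσ
      rw [map_one]
      ext x
      have := key x τ
      rw [mul_comm x (c τ)] at this
      simpa using (mul_left_cancel₀ hne this).symm
    have hb1 : b = ιK (c 1) := by
      rw [hc]
      simp only [hS]
      rw [Fintype.sum_eq_single 1]
      · rw [hu1, mul_one]
      · intro τ hτ; rw [hzero τ hτ]; simp
    refine ⟨c 1, fun τ' => ?_, hb1.symm⟩
    have h1 : u τ' * b = S (Pi.single τ' (σ τ' (c 1))) := by
      rw [hb1, huσ, hsingle]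
    have h2 : b * u τ' = S (Pi.single τ' (c 1)) := by
      rw [hb1, hsingle]
    have := uniq _ _ (h1 ▸ h2 ▸ (hbcomm (u τ')))
    have := congrFun this τ'
    simpa using this
  · rintro ⟨x, hx, rfl⟩
    rw [Semigroup.mem_center_iff]
    intro g
    obtain ⟨c, hcg, -⟩ := hufree g
    rw [hfs] at hcg
    rw [hcg]
    simp only [hS]
    rw [Finset.sum_mul, Finset.mul_sum]
    refine Finset.sum_congr rfl fun τ _ => ?_
    rw [mul_assoc, huσ, hx, ← mul_assoc, ← mul_assoc, ← map_mul, ← map_mul,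
      mul_comm (c τ) x]
end
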